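/- arXiv:1407.2367 — 3 statements merged into one kernel-verified Lean document; each statement's English description precedes it below -/
import Mathlib

section
/- Let p ∈ ℕ, let x_0 < x_N be real numbers, and let y_{0,2l}, y_{N,2l} ∈ ℝ for 0 ≤ l ≤ p. Then there exists a unique polynomial function q : ℝ → ℝ of degree at most 2p+1 satisfying the Lidstone conditions q^{(2l)}(x_0) = y_{0,2l} and q^{(2l)}(x_N) = y_{N,2l} for all 0 ≤ l ≤ p, and it is given explicitly by q(x) = Σ_{l=0}^{p} [ y_{0,2l} · Λ_l((x_N − x)/(x_N − x_0)) + y_{N,2l} · Λ_l((x − x_0)/(x_N − x_0)) ] · (x_N − x_0)^{2l}. -/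
/-- The defining property of the sequence of Lidstone polynomial functions. -/
def LidstoneProp (Λ : ℕ → ℝ → ℝ) : Prop :=
  (∀ l : ℕ, ∃ P : Polynomial ℝ, ∀ x : ℝ, Λ l x = P.eval x) ∧
  (∀ x : ℝ, Λ 0 x = x) ∧
  (∀ l : ℕ, (∀ x : ℝ, iteratedDeriv 2 (Λ (l + 1)) x = Λ l x) ∧
    Λ (l + 1) 0 = 0 ∧ Λ (l + 1) 1 = 0)

/-!
`Λ_l⁽²ᵏ⁾` equals `Λ_{l-k}` for `k ≤ l` and vanishes for `k > l` by degree, so it vanishes at `0`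
and takes the value `δ_{kl}` at `1`. Composed with the affine maps `x ↦ (x_N - x) / h` and
`x ↦ (x - x₀) / h`, where `h = x_N - x₀`, this shows that the explicit formula meets the Lidstone
conditions. For uniqueness, take the difference `r` of two solutions: descending from
`r⁽²ᵖ⁺²⁾ = 0`, each `r⁽²ˡ⁾` has zero second derivative and two zeros `x₀ ≠ x_N`, hence is zero.
-/

open Polynomial Finset

namespace Polynomial

theorem iteratedDeriv_eval {𝕜 : Type*} [NontriviallyNormedField 𝕜] (p : 𝕜[X]) (k : ℕ) :
    iteratedDeriv k (fun x => p.eval x) = fun x => (derivative^[k] p).eval x := by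
  induction k generalizing p with
  | zero => simp
  | succ k ih =>
    have hderiv : deriv (fun x => p.eval x) = fun x => (derivative p).eval x := by
      ext x
      exact p.deriv
    rw [iteratedDeriv_succ', hderiv, ih, Function.iterate_succ_apply]

theorem iterate_derivative_comp_of_derivative_eq_C {R : Type*} [CommSemiring R] {q : R[X]}
    {s : R} (hq : derivative q = C s) (p : R[X]) (k : ℕ) :
    derivative^[k] (p.comp q) = C (s ^ k) * (derivative^[k] p).comp q := by
  induction k generalizing p with
  | zero => simp
  | succ k ih =>
    rw [Function.iterate_succ_apply, derivative_comp, hq, iterate_derivative_C_mul, ih,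
      Function.iterate_succ_apply, ← mul_assoc, ← C_mul, pow_succ']

variable {K : Type*} [Field K] [CharZero K]

theorem eq_zero_of_iterate_derivative_two_eq_zero {r : K[X]} (hr : derivative^[2] r = 0)
    {a b : K} (hab : a ≠ b) (ha : r.eval a = 0) (hb : r.eval b = 0) : r = 0 := by
  classical
  have hdeg : r.natDegree < #{a, b} := by
    have h : (derivative r).natDegree = 0 := derivative_eq_zero.mp hr
    rw [natDegree_derivative] at h
    rw [card_pair hab]
    omega
  refine eq_zero_of_natDegree_lt_card_of_eval_eq_zero' r {a, b} ?_ hdeg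
  simp [ha, hb]

theorem eq_zero_of_iterate_derivative_eval_eq_zero {a b : K} (hab : a ≠ b) (p : ℕ) {r : K[X]}
    (hr : derivative^[2 * (p + 1)] r = 0)
    (h : ∀ l ≤ p, (derivative^[2 * l] r).eval a = 0 ∧ (derivative^[2 * l] r).eval b = 0) :
    r = 0 := by
  induction p generalizing r with
  | zero => exact eq_zero_of_iterate_derivative_two_eq_zero hr hab (h 0 le_rfl).1 (h 0 le_rfl).2
  | succ p ih =>
    have hr₂ : derivative^[2] r = 0 := by
      refine ih ?_ fun l hl => ?_
      · rwa [← Function.iterate_add_apply]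
      · rw [← Function.iterate_add_apply]
        exact h (l + 1) (by omega)
    exact eq_zero_of_iterate_derivative_two_eq_zero hr₂ hab (h 0 (by omega)).1 (h 0 (by omega)).2

theorem eq_of_iterate_derivative_eval_eq {a b : K} (hab : a ≠ b) {p : ℕ} {q₁ q₂ : K[X]}
    (h₁ : q₁.natDegree ≤ 2 * p + 1) (h₂ : q₂.natDegree ≤ 2 * p + 1)
    (h : ∀ l ≤ p, (derivative^[2 * l] q₁).eval a = (derivative^[2 * l] q₂).eval a ∧
      (derivative^[2 * l] q₁).eval b = (derivative^[2 * l] q₂).eval b) :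
    q₁ = q₂ := by
  rw [← sub_eq_zero]
  refine eq_zero_of_iterate_derivative_eval_eq_zero hab p
    (iterate_derivative_eq_zero ((natDegree_sub_le _ _).trans_lt (by omega))) fun l hl => ?_
  simp only [iterate_derivative_sub, eval_sub, (h l hl).1, (h l hl).2, sub_self, and_self]

end Polynomial

structure IsLidstoneSequence {R : Type*} [CommRing R] (P : ℕ → R[X]) : Prop where
  zero : P 0 = X
  iterate_derivative_two_succ : ∀ l, derivative^[2] (P (l + 1)) = P l
  eval_zero_succ : ∀ l, (P (l + 1)).eval 0 = 0
  eval_one_succ : ∀ l, (P (l + 1)).eval 1 = 0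

theorem LidstoneProp.exists_isLidstoneSequence {Λ : ℕ → ℝ → ℝ} (hΛ : LidstoneProp Λ) :
    ∃ P : ℕ → ℝ[X], IsLidstoneSequence P ∧ ∀ l x, Λ l x = (P l).eval x := by
  obtain ⟨hpoly, hzero, hsucc⟩ := hΛ
  choose P hP using hpoly
  obtain rfl : Λ = fun l x => (P l).eval x := funext fun l => funext (hP l)
  refine ⟨P, ⟨?_, fun l => ?_, fun l => (hsucc l).2.1, fun l => (hsucc l).2.2⟩, hP⟩
  · exact Polynomial.funext fun x => by simpa using hzero x
  · exact Polynomial.funext fun x => by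
      simpa only [iteratedDeriv_eval] using (hsucc l).1 x

namespace IsLidstoneSequence

variable {R : Type*} [CommRing R] {P : ℕ → R[X]}

theorem iterate_derivative_add (hP : IsLidstoneSequence P) (k m : ℕ) :
    derivative^[2 * k] (P (k + m)) = P m := by
  induction k with
  | zero => simp
  | succ k ih =>
    rw [mul_add_one, Function.iterate_add_apply, add_right_comm,
      hP.iterate_derivative_two_succ, ih]

theorem natDegree_le [IsAddTorsionFree R] (hP : IsLidstoneSequence P) (l : ℕ) :
    (P l).natDegree ≤ 2 * l + 1 := by
  induction l with
  | zero => simpa [hP.zero] using natDegree_X_le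
  | succ l ih =>
    have h : (derivative (derivative (P (l + 1)))).natDegree = (P l).natDegree :=
      congrArg natDegree (hP.iterate_derivative_two_succ l)
    rw [natDegree_derivative, natDegree_derivative] at h
    omega

theorem eval_iterate_derivative [IsAddTorsionFree R] (hP : IsLidstoneSequence P) (k l : ℕ)
    {x : R} (hx : x = 0 ∨ x = 1) :
    (derivative^[2 * k] (P l)).eval x = if k = l then x else 0 := by
  rcases lt_trichotomy l k with hlk | rfl | hkl
  · rw [iterate_derivative_eq_zero ((hP.natDegree_le l).trans_lt (by omega)), eval_zero,
      if_neg hlk.ne']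
  · simpa [hP.zero] using congrArg (eval x) (hP.iterate_derivative_add l 0)
  · obtain ⟨m, rfl⟩ := Nat.exists_eq_add_of_lt hkl
    rw [add_assoc, hP.iterate_derivative_add, if_neg (by omega)]
    rcases hx with rfl | rfl
    exacts [hP.eval_zero_succ m, hP.eval_one_succ m]

end IsLidstoneSequence

section Interpolant

variable {K : Type*} [Field K]

noncomputable def lidstoneInterpolant (P : ℕ → K[X]) (p : ℕ) (a b : K) (y₀ yN : ℕ → K) :
    K[X] :=
  ∑ l ∈ range (p + 1), C ((b - a) ^ (2 * l)) *
    (C (y₀ l) * (P l).comp ((C b - X) * C (b - a)⁻¹) +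
      C (yN l) * (P l).comp ((X - C a) * C (b - a)⁻¹))

variable {P : ℕ → K[X]} {p : ℕ} {a b : K} {y₀ yN : ℕ → K}

theorem eval_lidstoneInterpolant (x : K) :
    (lidstoneInterpolant P p a b y₀ yN).eval x = ∑ l ∈ range (p + 1),
      (y₀ l * (P l).eval ((b - x) / (b - a)) + yN l * (P l).eval ((x - a) / (b - a))) *
        (b - a) ^ (2 * l) := by
  simp only [lidstoneInterpolant, eval_finsetSum, eval_mul, eval_add, eval_C, eval_comp,
    eval_sub, eval_X, div_eq_mul_inv]
  exact sum_congr rfl fun l _ => mul_comm _ _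

variable [CharZero K]

theorem natDegree_lidstoneInterpolant_le (hP : IsLidstoneSequence P) :
    (lidstoneInterpolant P p a b y₀ yN).natDegree ≤ 2 * p + 1 := by
  refine natDegree_sum_le_of_forall_le _ _ fun l hl => ?_
  have hl : l ≤ p := Nat.lt_succ_iff.mp (mem_range.mp hl)
  have hcomp : ∀ A : K[X], A.natDegree ≤ 1 → ((P l).comp A).natDegree ≤ 2 * p + 1 :=
    fun A hA => natDegree_comp_le.trans
      ((Nat.mul_le_mul (hP.natDegree_le l) hA).trans (by omega))
  refine (natDegree_C_mul_le _ _).trans ((natDegree_add_le _ _).trans (max_le ?_ ?_))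
  · exact (natDegree_C_mul_le _ _).trans (hcomp _ (by compute_degree))
  · exact (natDegree_C_mul_le _ _).trans (hcomp _ (by compute_degree))

theorem eval_iterate_derivative_lidstoneInterpolant (hP : IsLidstoneSequence P) (hab : a ≠ b)
    {k : ℕ} (hk : k ≤ p) {z : K} (hz₀ : (b - z) / (b - a) = 0 ∨ (b - z) / (b - a) = 1)
    (hzN : (z - a) / (b - a) = 0 ∨ (z - a) / (b - a) = 1) :
    (derivative^[2 * k] (lidstoneInterpolant P p a b y₀ yN)).eval z =
      y₀ k * ((b - z) / (b - a)) + yN k * ((z - a) / (b - a)) := by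
  have hd₀ : derivative ((C b - X) * C (b - a)⁻¹) = C (-(b - a)⁻¹) := by simp
  have hdN : derivative ((X - C a) * C (b - a)⁻¹) = C (b - a)⁻¹ := by simp
  simp only [lidstoneInterpolant, iterate_derivative_sum, iterate_derivative_C_mul,
    iterate_map_add, iterate_derivative_comp_of_derivative_eq_C hd₀,
    iterate_derivative_comp_of_derivative_eq_C hdN, eval_finsetSum, eval_mul, eval_add,
    eval_C, eval_comp, eval_sub, eval_X, ← div_eq_mul_inv,
    hP.eval_iterate_derivative k _ hz₀, hP.eval_iterate_derivative k _ hzN]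
  have hpow : (b - a) ^ (2 * k) * (b - a)⁻¹ ^ (2 * k) = 1 := by
    rw [← mul_pow, mul_inv_cancel₀ (sub_ne_zero.mpr hab.symm), one_pow]
  rw [sum_eq_single k (fun l _ hl => by simp [Ne.symm hl])
    (fun hk' => absurd (mem_range.mpr (by omega)) hk'), if_pos rfl, if_pos rfl,
    (even_two_mul k).neg_pow]
  linear_combination (y₀ k * ((b - z) / (b - a)) + yN k * ((z - a) / (b - a))) * hpow

theorem eval_left_iterate_derivative_lidstoneInterpolant (hP : IsLidstoneSequence P)
    (hab : a ≠ b) {k : ℕ} (hk : k ≤ p) :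
    (derivative^[2 * k] (lidstoneInterpolant P p a b y₀ yN)).eval a = y₀ k := by
  have hba : b - a ≠ 0 := sub_ne_zero.mpr hab.symm
  rw [eval_iterate_derivative_lidstoneInterpolant hP hab hk] <;>
    simp [div_self hba]

theorem eval_right_iterate_derivative_lidstoneInterpolant (hP : IsLidstoneSequence P)
    (hab : a ≠ b) {k : ℕ} (hk : k ≤ p) :
    (derivative^[2 * k] (lidstoneInterpolant P p a b y₀ yN)).eval b = yN k := by
  have hba : b - a ≠ 0 := sub_ne_zero.mpr hab.symm
  rw [eval_iterate_derivative_lidstoneInterpolant hP hab hk] <;>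
    simp [div_self hba]

end Interpolant

/-- There exists a unique polynomial `q` of degree at most `2p+1` satisfying the
Lidstone conditions `q^(2l)(x₀) = y₀ l`, `q^(2l)(xN) = yN l` for `0 ≤ l ≤ p`, and
it is given explicitly by the Lidstone interpolation formula. -/
theorem lidstone_interpolating_polynomial (Λ : ℕ → ℝ → ℝ) (hΛ : LidstoneProp Λ)
    (p : ℕ) (x₀ xN : ℝ) (hx : x₀ < xN) (y₀ yN : ℕ → ℝ) :
    (∃! q : Polynomial ℝ, q.natDegree ≤ 2 * p + 1 ∧
      ∀ l ≤ p, (Polynomial.derivative^[2 * l] q).eval x₀ = y₀ l ∧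
        (Polynomial.derivative^[2 * l] q).eval xN = yN l) ∧
    (∀ q : Polynomial ℝ,
      (q.natDegree ≤ 2 * p + 1 ∧
        ∀ l ≤ p, (Polynomial.derivative^[2 * l] q).eval x₀ = y₀ l ∧
          (Polynomial.derivative^[2 * l] q).eval xN = yN l) →
      ∀ x : ℝ, q.eval x = ∑ l ∈ Finset.range (p + 1),
        (y₀ l * Λ l ((xN - x) / (xN - x₀)) + yN l * Λ l ((x - x₀) / (xN - x₀))) *
          (xN - x₀) ^ (2 * l)) := by
  obtain ⟨P, hP, hΛP⟩ := hΛ.exists_isLidstoneSequence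
  set Q := lidstoneInterpolant P p x₀ xN y₀ yN
  have hQ : Q.natDegree ≤ 2 * p + 1 ∧ ∀ l ≤ p, (derivative^[2 * l] Q).eval x₀ = y₀ l ∧
      (derivative^[2 * l] Q).eval xN = yN l :=
    ⟨natDegree_lidstoneInterpolant_le hP, fun l hl =>
      ⟨eval_left_iterate_derivative_lidstoneInterpolant hP hx.ne hl,
        eval_right_iterate_derivative_lidstoneInterpolant hP hx.ne hl⟩⟩
  have eq_Q : ∀ q : ℝ[X], (q.natDegree ≤ 2 * p + 1 ∧ ∀ l ≤ p,
      (derivative^[2 * l] q).eval x₀ = y₀ l ∧ (derivative^[2 * l] q).eval xN = yN l) → q = Q :=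
    fun q hq => eq_of_iterate_derivative_eval_eq hx.ne hq.1 hQ.1 fun l hl =>
      ⟨(hq.2 l hl).1.trans (hQ.2 l hl).1.symm, (hq.2 l hl).2.trans (hQ.2 l hl).2.symm⟩
  refine ⟨⟨Q, hQ, eq_Q⟩, fun q hq x => ?_⟩
  simp only [eq_Q q hq, Q, eval_lidstoneInterpolant, hΛP]
end

section
/- For every integer p ≥ 1 and every integer k with 0 ≤ k ≤ 2p there exists a constant c(p,k) > 0, depending only on p and k, with the following property: for every partition x_0 < x_1 < ⋯ < x_N of an interval [x_0,x_N] and every 2p-times continuously differentiable function g : [x_0,x_N] → ℝ, the piecewise Lidstone interpolant L^Δ g of g satisfies max_{1 ≤ n ≤ N} sup_{x ∈ (x_{n−1},x_n)} |(g − L^Δ g)^{(k)}(x)| ≤ c(p,k) · ‖g^{(2p)}‖_∞ · ‖Δ‖^{2p−k}, where ‖Δ‖ = max_{1 ≤ n ≤ N} (x_n − x_{n−1}) and ‖g^{(2p)}‖_∞ = sup_{x ∈ [x_0,x_N]} |g^{(2p)}(x)|. -/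
open Set Filter Topology

section IteratedDerivWithin

variable {𝕜 F : Type*} [NontriviallyNormedField 𝕜] [NormedAddCommGroup F] [NormedSpace 𝕜 F]
  {f : 𝕜 → F} {s t : Set 𝕜} {x : 𝕜}

theorem iteratedDerivWithin_congr_set (h : s =ᶠ[𝓝 x] t) (n : ℕ) :
    iteratedDerivWithin n f s x = iteratedDerivWithin n f t x := by
  simp only [iteratedDerivWithin_eq_iteratedFDerivWithin, iteratedFDerivWithin_congr_set h n]

theorem iteratedDerivWithin_subset {n m : ℕ} (st : s ⊆ t) (hs : UniqueDiffOn 𝕜 s)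
    (ht : UniqueDiffOn 𝕜 t) (hf : ContDiffOn 𝕜 n f t) (hm : m ≤ n) (hx : x ∈ s) :
    iteratedDerivWithin m f s x = iteratedDerivWithin m f t x := by
  simp only [iteratedDerivWithin_eq_iteratedFDerivWithin,
    iteratedFDerivWithin_subset st hs ht (hf.of_le (by exact_mod_cast hm)) hx]

theorem ContDiffOn.hasDerivWithinAt_iteratedDerivWithin {n : WithTop ℕ∞} {m : ℕ}
    (hf : ContDiffOn 𝕜 n f s) (hmn : m < n) (hs : UniqueDiffOn 𝕜 s) (hx : x ∈ s) :
    HasDerivWithinAt (iteratedDerivWithin m f s) (iteratedDerivWithin (m + 1) f s x) s x := by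
  rw [iteratedDerivWithin_succ]
  exact ((hf.differentiableOn_iteratedDerivWithin hmn hs) x hx).hasDerivWithinAt

end IteratedDerivWithin

theorem abs_le_mul_of_hasDerivWithinAt_of_apply_eq_zero {f f' : ℝ → ℝ} {a b C x₀ : ℝ}
    (hf : ∀ t ∈ Icc a b, HasDerivWithinAt f (f' t) (Icc a b) t)
    (hC : ∀ t ∈ Icc a b, |f' t| ≤ C) (hx₀ : x₀ ∈ Icc a b) (h₀ : f x₀ = 0) :
    ∀ t ∈ Icc a b, |f t| ≤ C * (b - a) := by
  intro t ht
  have hmvt := (convex_Icc a b).norm_image_sub_le_of_norm_hasDerivWithin_le hf hC hx₀ ht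
  rw [Real.norm_eq_abs, Real.norm_eq_abs, h₀, sub_zero] at hmvt
  have hdist : |t - x₀| ≤ b - a :=
    abs_sub_le_iff.2 ⟨by linarith [ht.2, hx₀.1], by linarith [ht.1, hx₀.2]⟩
  exact hmvt.trans (mul_le_mul_of_nonneg_left hdist ((abs_nonneg _).trans (hC t ht)))

theorem abs_le_mul_pow_of_hasDerivWithinAt_chain {F : ℕ → ℝ → ℝ} {a b K : ℝ} (m : ℕ)
    (hab : a < b)
    (hF : ∀ j < 2 * m, ∀ t ∈ Icc a b, HasDerivWithinAt (F j) (F (j + 1) t) (Icc a b) t)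
    (hvan : ∀ l < m, F (2 * l) a = 0 ∧ F (2 * l) b = 0)
    (hK : ∀ t ∈ Icc a b, |F (2 * m) t| ≤ K) :
    ∀ j ≤ 2 * m, ∀ t ∈ Icc a b, |F j t| ≤ K * (b - a) ^ (2 * m - j) := by
  induction m generalizing F with
  | zero =>
    intro j hj t ht
    obtain rfl : j = 0 := by omega
    simpa using hK t ht
  | succ m ih =>
    have hshift := ih (F := fun j => F (j + 2)) (fun j hj => hF (j + 2) (by omega))
      (fun l hl => hvan (l + 1) (by omega)) hK
    have hF2 : ∀ t ∈ Icc a b, |F 2 t| ≤ K * (b - a) ^ (2 * m) := by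
      simpa using hshift 0 (Nat.zero_le _)
    obtain ⟨ξ, hξ, hF1ξ⟩ : ∃ ξ ∈ Ioo a b, F 1 ξ = 0 := by
      refine exists_hasDerivAt_eq_zero hab
        (fun t ht => (hF 0 (by omega) t ht).continuousWithinAt)
        ((hvan 0 (by omega)).1.trans (hvan 0 (by omega)).2.symm) fun t ht => ?_
      exact (hF 0 (by omega) t (Ioo_subset_Icc_self ht)).hasDerivAt (Icc_mem_nhds ht.1 ht.2)
    have hF1 := abs_le_mul_of_hasDerivWithinAt_of_apply_eq_zero (hF 1 (by omega)) hF2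
      (Ioo_subset_Icc_self hξ) hF1ξ
    have hF0 := abs_le_mul_of_hasDerivWithinAt_of_apply_eq_zero (hF 0 (by omega)) hF1
      (left_mem_Icc.2 hab.le) (hvan 0 (by omega)).1
    intro j hj t ht
    match j, hj with
    | 0, _ => simpa [mul_add, pow_succ, mul_assoc] using hF0 t ht
    | 1, _ => simpa [mul_add, pow_succ, mul_assoc, show 2 * m + 2 - 1 = 2 * m + 1 by omega]
        using hF1 t ht
    | j + 2, hj => simpa [show 2 * (m + 1) - (j + 2) = 2 * m - j by omega]
        using hshift j (by omega) t ht

theorem abs_iteratedDerivWithin_le_of_even_vanish {f : ℝ → ℝ} {a b K : ℝ} {m : ℕ}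
    (hab : a < b) (hf : ContDiffOn ℝ (2 * m) f (Icc a b))
    (hvan : ∀ l < m, iteratedDerivWithin (2 * l) f (Icc a b) a = 0 ∧
      iteratedDerivWithin (2 * l) f (Icc a b) b = 0)
    (hK : ∀ t ∈ Icc a b, |iteratedDerivWithin (2 * m) f (Icc a b) t| ≤ K)
    {j : ℕ} (hj : j ≤ 2 * m) {t : ℝ} (ht : t ∈ Icc a b) :
    |iteratedDerivWithin j f (Icc a b) t| ≤ K * (b - a) ^ (2 * m - j) :=
  abs_le_mul_pow_of_hasDerivWithinAt_chain m hab (F := fun i => iteratedDerivWithin i f (Icc a b))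
    (fun _ hi _ hs => hf.hasDerivWithinAt_iteratedDerivWithin (by exact_mod_cast hi)
      (uniqueDiffOn_Icc hab) hs) hvan hK j hj t ht

theorem iteratedDeriv_comp_sub_div {n : ℕ} {f : ℝ → ℝ} (hf : ContDiff ℝ n f) (a h : ℝ) :
    iteratedDeriv n (fun s => f ((s - a) / h)) =
      fun s => iteratedDeriv n f ((s - a) / h) / h ^ n := by
  have := iteratedDeriv_comp_sub_const n (fun y => f (h⁻¹ * y)) a
  simp only [iteratedDeriv_comp_const_mul hf] at this
  simp only [div_eq_inv_mul, this, inv_pow]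

namespace LidstoneProp

variable {Λ : ℕ → ℝ → ℝ} (hΛ : LidstoneProp Λ)
include hΛ

theorem contDiff (l : ℕ) {n : WithTop ℕ∞} : ContDiff ℝ n (Λ l) := by
  obtain ⟨P, hP⟩ := hΛ.1 l
  simpa [funext hP] using P.contDiff_aeval (𝕜 := ℝ) n

theorem zero_apply (x : ℝ) : Λ 0 x = x := hΛ.2.1 x

theorem succ_apply_zero (l : ℕ) : Λ (l + 1) 0 = 0 := (hΛ.2.2 l).2.1

theorem succ_apply_one (l : ℕ) : Λ (l + 1) 1 = 0 := (hΛ.2.2 l).2.2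

theorem iteratedDeriv_two_succ (l : ℕ) : iteratedDeriv 2 (Λ (l + 1)) = Λ l :=
  funext (hΛ.2.2 l).1

theorem iteratedDeriv_two_zero : iteratedDeriv 2 (Λ 0) = 0 := by
  rw [funext hΛ.zero_apply]
  ext x
  simp [iteratedDeriv_fun_id]

end LidstoneProp

/-- The restriction of `L^Δ g` to the cell `[a, b]`, with `u l`, `v l` in place of
`g^{(2l)}(a)`, `g^{(2l)}(b)`. -/
noncomputable def lidstoneInterp (Λ : ℕ → ℝ → ℝ) (a b : ℝ) (u v : ℕ → ℝ) (m : ℕ)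
    (s : ℝ) : ℝ :=
  ∑ l ∈ Finset.range (m + 1),
    (u l * Λ l ((b - s) / (b - a)) + v l * Λ l ((s - a) / (b - a))) * (b - a) ^ (2 * l)

namespace lidstoneInterp

variable {Λ : ℕ → ℝ → ℝ} (hΛ : LidstoneProp Λ) {a b : ℝ} (u v : ℕ → ℝ)
include hΛ

theorem contDiff (m : ℕ) {n : WithTop ℕ∞} : ContDiff ℝ n (lidstoneInterp Λ a b u v m) := by
  have := hΛ.contDiff (n := n)
  unfold lidstoneInterp
  fun_prop

theorem apply_left (hab : a ≠ b) (m : ℕ) : lidstoneInterp Λ a b u v m a = u 0 := by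
  rw [lidstoneInterp, Finset.sum_range_succ', div_self (sub_ne_zero.2 hab.symm), sub_self,
    zero_div]
  simp [hΛ.succ_apply_zero, hΛ.succ_apply_one, hΛ.zero_apply]

theorem apply_right (hab : a ≠ b) (m : ℕ) : lidstoneInterp Λ a b u v m b = v 0 := by
  rw [lidstoneInterp, Finset.sum_range_succ', div_self (sub_ne_zero.2 hab.symm), sub_self,
    zero_div]
  simp [hΛ.succ_apply_zero, hΛ.succ_apply_one, hΛ.zero_apply]

theorem abs_zero_le {M s : ℝ} (hab : a < b) (hs : s ∈ Icc a b) (hu : |u 0| ≤ M)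
    (hv : |v 0| ≤ M) :
    |lidstoneInterp Λ a b u v 0 s| ≤ M := by
  have hba : 0 < b - a := sub_pos.2 hab
  have hl : 0 ≤ (b - s) / (b - a) := div_nonneg (sub_nonneg.2 hs.2) hba.le
  have hr : 0 ≤ (s - a) / (b - a) := div_nonneg (sub_nonneg.2 hs.1) hba.le
  have hsum : (b - s) / (b - a) + (s - a) / (b - a) = 1 := by field_simp; ring
  simp only [lidstoneInterp, zero_add, Finset.sum_range_one, hΛ.zero_apply, mul_zero, pow_zero,
    mul_one]
  calc |u 0 * ((b - s) / (b - a)) + v 0 * ((s - a) / (b - a))|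
      ≤ |u 0 * ((b - s) / (b - a))| + |v 0 * ((s - a) / (b - a))| := abs_add_le _ _
    _ = |u 0| * ((b - s) / (b - a)) + |v 0| * ((s - a) / (b - a)) := by
        rw [abs_mul, abs_mul, abs_of_nonneg hl, abs_of_nonneg hr]
    _ ≤ M * ((b - s) / (b - a)) + M * ((s - a) / (b - a)) :=
        add_le_add (mul_le_mul_of_nonneg_right hu hl) (mul_le_mul_of_nonneg_right hv hr)
    _ = M := by rw [← mul_add, hsum, mul_one]

theorem iteratedDeriv_two (hab : a ≠ b) (m : ℕ) :
    iteratedDeriv 2 (lidstoneInterp Λ a b u v (m + 1)) =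
      lidstoneInterp Λ a b (fun l => u (l + 1)) (fun l => v (l + 1)) m := by
  have hba : b - a ≠ 0 := sub_ne_zero.2 hab.symm
  have hsummand : ∀ l s, iteratedDeriv 2 (fun s => (u l * Λ l ((b - s) / (b - a)) +
      v l * Λ l ((s - a) / (b - a))) * (b - a) ^ (2 * l)) s =
      (u l * iteratedDeriv 2 (Λ l) ((b - s) / (b - a)) +
        v l * iteratedDeriv 2 (Λ l) ((s - a) / (b - a))) * (b - a) ^ (2 * l) / (b - a) ^ 2 := by
    intro l s
    have hΛl := hΛ.contDiff l (n := 2)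
    have hflip : (fun s => Λ l ((b - s) / (b - a))) = fun s => Λ l ((s - b) / (a - b)) := by
      ext s; rw [← neg_sub b s, ← neg_sub b a, neg_div_neg_eq]
    rw [iteratedDeriv_mul_const_field, iteratedDeriv_fun_add (by fun_prop) (by fun_prop),
      iteratedDeriv_const_mul_field, iteratedDeriv_const_mul_field, hflip,
      iteratedDeriv_comp_sub_div hΛl, iteratedDeriv_comp_sub_div hΛl]
    simp only [← neg_sub b, neg_div_neg_eq, neg_sq]
    ring
  ext s
  have hΛ2 := hΛ.contDiff (n := 2)
  unfold lidstoneInterp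
  rw [iteratedDeriv_fun_sum (fun l _ => by fun_prop), Finset.sum_range_succ']
  simp only [hsummand]
  simp only [hΛ.iteratedDeriv_two_zero, hΛ.iteratedDeriv_two_succ, Pi.zero_apply, mul_zero,
    add_zero, zero_mul, zero_div]
  refine Finset.sum_congr rfl fun l _ => ?_
  rw [mul_add_one, pow_add]
  field_simp

theorem iteratedDeriv_two_mul (hab : a ≠ b) (l m : ℕ) :
    iteratedDeriv (2 * l) (lidstoneInterp Λ a b u v (m + l)) =
      lidstoneInterp Λ a b (fun i => u (i + l)) (fun i => v (i + l)) m := by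
  induction l generalizing u v with
  | zero => simp
  | succ l ih =>
    rw [mul_add_one, iteratedDeriv_eq_iterate, Function.iterate_add_apply,
      ← iteratedDeriv_eq_iterate, ← iteratedDeriv_eq_iterate, ← add_assoc,
      iteratedDeriv_two hΛ _ _ hab, ih]
    simp only [add_assoc]

end lidstoneInterp

theorem abs_iteratedDerivWithin_sub_le_of_eqOn_lidstoneInterp {Λ : ℕ → ℝ → ℝ}
    (hΛ : LidstoneProp Λ) {g L : ℝ → ℝ} {a b M : ℝ} {p : ℕ} {u v : ℕ → ℝ}
    (hab : a < b) (hg : ContDiffOn ℝ (2 * p) g (Icc a b))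
    (hL : ∀ s ∈ Icc a b, L s = lidstoneInterp Λ a b u v p s)
    (hu : ∀ l ≤ p, u l = iteratedDerivWithin (2 * l) g (Icc a b) a)
    (hv : ∀ l ≤ p, v l = iteratedDerivWithin (2 * l) g (Icc a b) b)
    (hM : ∀ t ∈ Icc a b, |iteratedDerivWithin (2 * p) g (Icc a b) t| ≤ M)
    {k : ℕ} (hk : k ≤ 2 * p) {t : ℝ} (ht : t ∈ Icc a b) :
    |iteratedDerivWithin k (fun s => g s - L s) (Icc a b) t| ≤ 2 * M * (b - a) ^ (2 * p - k) := by
  set Q := lidstoneInterp Λ a b u v p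
  have hI : UniqueDiffOn ℝ (Icc a b) := uniqueDiffOn_Icc hab
  have hQ : ContDiff ℝ (2 * p) Q := lidstoneInterp.contDiff hΛ u v p
  have hderiv : ∀ j ≤ 2 * p, ∀ s ∈ Icc a b,
      iteratedDerivWithin j (fun s => g s - L s) (Icc a b) s =
        iteratedDerivWithin j g (Icc a b) s - iteratedDeriv j Q s := by
    intro j hj s hs
    have hQj : ContDiff ℝ j Q := hQ.of_le (by exact_mod_cast hj)
    rw [iteratedDerivWithin_congr (g := g - Q) (fun s hs => by simp [hL s hs]) hs,
      iteratedDerivWithin_sub hs hI ((hg.of_le (by exact_mod_cast hj)) s hs)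
        hQj.contDiffWithinAt, iteratedDerivWithin_eq_iteratedDeriv hI hQj.contDiffAt hs]
  have hQ_even : ∀ l ≤ p, iteratedDeriv (2 * l) Q =
      lidstoneInterp Λ a b (fun i => u (i + l)) (fun i => v (i + l)) (p - l) := by
    intro l hl
    simpa only [Nat.sub_add_cancel hl] using
      lidstoneInterp.iteratedDeriv_two_mul hΛ u v hab.ne l (p - l)
  have ha : a ∈ Icc a b := left_mem_Icc.2 hab.le
  have hb : b ∈ Icc a b := right_mem_Icc.2 hab.le
  refine abs_iteratedDerivWithin_le_of_even_vanish hab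
    ((hg.sub hQ.contDiffOn).congr fun s hs => by simp [hL s hs]) ?_ ?_ hk ht
  · intro l hl
    rw [hderiv _ (by omega) _ ha, hderiv _ (by omega) _ hb, hQ_even l hl.le,
      lidstoneInterp.apply_left hΛ _ _ hab.ne, lidstoneInterp.apply_right hΛ _ _ hab.ne]
    simp [hu l hl.le, hv l hl.le]
  · intro s hs
    have hQp : |iteratedDeriv (2 * p) Q s| ≤ M := by
      rw [hQ_even p le_rfl, Nat.sub_self]
      exact lidstoneInterp.abs_zero_le hΛ _ _ hab hs
        (by simpa [← hu p le_rfl] using hM a ha) (by simpa [← hv p le_rfl] using hM b hb)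
    rw [hderiv _ le_rfl s hs]
    linarith [abs_sub (iteratedDerivWithin (2 * p) g (Icc a b) s) (iteratedDeriv (2 * p) Q s),
      hM s hs]

theorem piecewise_lidstone_interpolation_error_general (Λ : ℕ → ℝ → ℝ) (hΛ : LidstoneProp Λ)
    (p : ℕ) (k : ℕ) (hk : k ≤ 2 * p) :
    ∃ c : ℝ, 0 < c ∧
      ∀ (N : ℕ), 1 ≤ N → ∀ (x : ℕ → ℝ), (∀ n < N, x n < x (n + 1)) →
      ∀ g Lg : ℝ → ℝ,
        ContDiffOn ℝ (2 * p) g (Set.Icc (x 0) (x N)) →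
        (∀ n, 1 ≤ n → n ≤ N → ∀ t ∈ Set.Icc (x (n - 1)) (x n),
          Lg t = ∑ l ∈ Finset.range (p + 1),
            (iteratedDerivWithin (2 * l) g (Set.Icc (x 0) (x N)) (x (n - 1)) *
                Λ l ((x n - t) / (x n - x (n - 1))) +
              iteratedDerivWithin (2 * l) g (Set.Icc (x 0) (x N)) (x n) *
                Λ l ((t - x (n - 1)) / (x n - x (n - 1)))) *
              (x n - x (n - 1)) ^ (2 * l)) →
        ∀ M δ : ℝ,
          IsLUB ((fun t => |iteratedDerivWithin (2 * p) g (Set.Icc (x 0) (x N)) t|) ''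
            Set.Icc (x 0) (x N)) M →
          IsGreatest {d : ℝ | ∃ n, 1 ≤ n ∧ n ≤ N ∧ d = x n - x (n - 1)} δ →
          ∀ n, 1 ≤ n → n ≤ N → ∀ t ∈ Set.Ioo (x (n - 1)) (x n),
            |iteratedDerivWithin k (fun s => g s - Lg s) (Set.Icc (x 0) (x N)) t| ≤
              c * M * δ ^ (2 * p - k) := by
  refine ⟨2, two_pos, fun N _ x hx g Lg hg hLg M δ hM hδ n hn hnN t ht => ?_⟩
  have hxmono : StrictMonoOn x (Iic N) := strictMonoOn_Iic_of_lt_succ hx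
  have hab : x (n - 1) < x n := hxmono (by simp; omega) (by simpa) (by omega)
  have hIS : Icc (x (n - 1)) (x n) ⊆ Icc (x 0) (x N) :=
    Icc_subset_Icc (hxmono.monotoneOn (by simp) (by simp; omega) (Nat.zero_le _))
      (hxmono.monotoneOn (by simpa) (by simp) hnN)
  have hS : UniqueDiffOn ℝ (Icc (x 0) (x N)) := uniqueDiffOn_Icc
    ((hIS (left_mem_Icc.2 hab.le)).1.trans_lt (hab.trans_le (hIS (right_mem_Icc.2 hab.le)).2))
  have hrestrict : ∀ j ≤ 2 * p, ∀ s ∈ Icc (x (n - 1)) (x n),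
      iteratedDerivWithin j g (Icc (x 0) (x N)) s =
        iteratedDerivWithin j g (Icc (x (n - 1)) (x n)) s :=
    fun j hj s hs => (iteratedDerivWithin_subset hIS (uniqueDiffOn_Icc hab) hS hg hj hs).symm
  have hlocal := abs_iteratedDerivWithin_sub_le_of_eqOn_lidstoneInterp hΛ hab (hg.mono hIS)
    (hLg n hn hnN) (fun l hl => hrestrict (2 * l) (by omega) _ (left_mem_Icc.2 hab.le))
    (fun l hl => hrestrict (2 * l) (by omega) _ (right_mem_Icc.2 hab.le))
    (fun s hs => by rw [← hrestrict _ le_rfl s hs]; exact hM.1 ⟨s, hIS hs, rfl⟩) hk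
    (Ioo_subset_Icc_self ht)
  have hmesh : x n - x (n - 1) ≤ δ := hδ.2 ⟨n, hn, hnN, rfl⟩
  have hM0 : 0 ≤ M := (abs_nonneg _).trans (hM.1 ⟨t, hIS (Ioo_subset_Icc_self ht), rfl⟩)
  rw [iteratedDerivWithin_congr_set (eventuallyEq_set.2 (by
    filter_upwards [Icc_mem_nhds ht.1 ht.2] with s hs using iff_of_true (hIS hs) hs))]
  exact hlocal.trans (by gcongr)

/-- For every `p ≥ 1` and `0 ≤ k ≤ 2p` there is a constant `c = c(p,k) > 0` such that
for every partition `x 0 < x 1 < ⋯ < x N` and every `2p`-times continuously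
differentiable `g` on `[x 0, x N]`, the piecewise Lidstone interpolant `Lg` of `g`
satisfies `|(g - Lg)^(k)| ≤ c ‖g^(2p)‖_∞ ‖Δ‖^(2p-k)` on every open subinterval,
where `M = ‖g^(2p)‖_∞` and `δ = ‖Δ‖` is the mesh of the partition. -/
theorem piecewise_lidstone_interpolation_error (Λ : ℕ → ℝ → ℝ) (hΛ : LidstoneProp Λ)
    (p : ℕ) (hp : 1 ≤ p) (k : ℕ) (hk : k ≤ 2 * p) :
    ∃ c : ℝ, 0 < c ∧
      ∀ (N : ℕ), 1 ≤ N → ∀ (x : ℕ → ℝ), (∀ n < N, x n < x (n + 1)) →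
      ∀ g Lg : ℝ → ℝ,
        ContDiffOn ℝ (2 * p) g (Set.Icc (x 0) (x N)) →
        (∀ n, 1 ≤ n → n ≤ N → ∀ t ∈ Set.Icc (x (n - 1)) (x n),
          Lg t = ∑ l ∈ Finset.range (p + 1),
            (iteratedDerivWithin (2 * l) g (Set.Icc (x 0) (x N)) (x (n - 1)) *
                Λ l ((x n - t) / (x n - x (n - 1))) +
              iteratedDerivWithin (2 * l) g (Set.Icc (x 0) (x N)) (x n) *
                Λ l ((t - x (n - 1)) / (x n - x (n - 1)))) *
              (x n - x (n - 1)) ^ (2 * l)) →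
        ∀ M δ : ℝ,
          IsLUB ((fun t => |iteratedDerivWithin (2 * p) g (Set.Icc (x 0) (x N)) t|) ''
            Set.Icc (x 0) (x N)) M →
          IsGreatest {d : ℝ | ∃ n, 1 ≤ n ∧ n ≤ N ∧ d = x n - x (n - 1)} δ →
          ∀ n, 1 ≤ n → n ≤ N → ∀ t ∈ Set.Ioo (x (n - 1)) (x n),
            |iteratedDerivWithin k (fun s => g s - Lg s) (Set.Icc (x 0) (x N)) t| ≤
              c * M * δ ^ (2 * p - k) :=
  piecewise_lidstone_interpolation_error_general Λ hΛ p k hk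
end

section
/- Let p ≥ 1 and let g : [x_0,x_N] → ℝ be 2p-times continuously differentiable. Then there exists a constant C > 0, depending only on g, p, x_0 and x_N, with the following property: for every integer N ≥ 2, taking the uniform partition x_n = x_0 + n(x_N − x_0)/N and the data y_{n,2k} = g^{(2k)}(x_n) (0 ≤ n ≤ N, 0 ≤ k ≤ p), every scaling vector α with max_n |α_n| < N^{−2p}, and every continuous function ℓ_α on [x_0,x_N] satisfying ℓ_α(L_n(x)) = α_n ℓ_α(x) + q_n(α_n, x) for all x ∈ [x_0,x_N] and 1 ≤ n ≤ N, one has sup_{x ∈ [x_0,x_N]} |g(x) − ℓ_α(x)| ≤ C · N^{−2p}. -/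
/-!
Write `E = g - ℓ`. The functional equation gives `E ∘ L n = α n • E + R n` with the defect
`R n = g ∘ L n - α n • g - q n`. The interpolation conditions on `q n` say exactly that the even
derivatives of `R n` of order `< 2p` vanish at both endpoints, while `(R n)^(2p) = O(N^(-2p))`
because `L n` has slope `1 / N`, `|α n| < N^(-2p)` and `(q n)^(2p)` is affine. Applying `p` times
the two-point estimate `|v| ≤ (b - a)² / 8 · sup |v''|` for `v(a) = v(b) = 0` gives
`|R n| = O(N^(-2p))`. Finally the pieces `L n` cover `[a, b]` and `|α n| ≤ 1/2`, so at a maximum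
point of `|E|` one gets `‖E‖ ≤ ‖E‖ / 2 + sup |R n|`.
-/

open Set
open scoped Polynomial

section IteratedDerivWithin

variable {𝕜 F : Type*} [NontriviallyNormedField 𝕜] [NormedAddCommGroup F] [NormedSpace 𝕜 F]
  {f : 𝕜 → F} {s : Set 𝕜}

theorem iteratedDerivWithin_iteratedDerivWithin (m k : ℕ) :
    iteratedDerivWithin m (iteratedDerivWithin k f s) s = iteratedDerivWithin (m + k) f s := by
  have hiter : ∀ n, iteratedDerivWithin n f s = (fun g : 𝕜 → F => derivWithin g s)^[n] f :=
    fun n => funext fun _ => iteratedDerivWithin_eq_iterate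
  rw [hiter k, hiter (m + k), Function.iterate_add_apply]
  exact funext fun _ => iteratedDerivWithin_eq_iterate

theorem ContDiffOn.iteratedDerivWithin_right {n : WithTop ℕ∞} {m i : ℕ} (hf : ContDiffOn 𝕜 n f s)
    (hs : UniqueDiffOn 𝕜 s) (hmn : m + i ≤ n) :
    ContDiffOn 𝕜 m (iteratedDerivWithin i f s) s := by
  rw [iteratedDerivWithin_eq_equiv_comp]
  exact (LinearIsometryEquiv.contDiff _).comp_contDiffOn
    fun x hx => (hf x hx).iteratedFDerivWithin_right hs hmn hx

theorem iteratedDerivWithin_comp_mul_add {n : ℕ} (hs : UniqueDiffOn 𝕜 s)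
    (hf : ContDiffOn 𝕜 n f s) (c d : 𝕜) (hmaps : MapsTo (fun x => c * x + d) s s) {x : 𝕜}
    (hx : x ∈ s) :
    iteratedDerivWithin n (fun x => f (c * x + d)) s x
      = c ^ n • iteratedDerivWithin n f s (c * x + d) := by
  induction n generalizing x with
  | zero => simp
  | succ n ih =>
    have hdiff : DifferentiableWithinAt 𝕜 (iteratedDerivWithin n f s) s (c * x + d) :=
      hf.differentiableOn_iteratedDerivWithin (by exact_mod_cast n.lt_succ_self) hs _ (hmaps hx)
    have hdiff' : DifferentiableWithinAt 𝕜
        (fun x => iteratedDerivWithin n f s (c * x + d)) s x :=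
      hdiff.comp x (by fun_prop) hmaps
    rw [iteratedDerivWithin_succ,
      derivWithin_congr (fun y hy => ih hf.of_succ hy) (ih hf.of_succ hx),
      derivWithin_fun_const_smul _ hdiff', iteratedDerivWithin_succ,
      ← Function.comp_def (iteratedDerivWithin n f s),
      derivWithin.scomp x hdiff (by fun_prop) hmaps,
      derivWithin_add_const, derivWithin_const_mul _ differentiableWithinAt_id,
      derivWithin_id' _ _ (hs _ hx), smul_smul, mul_one, pow_succ]

end IteratedDerivWithin

theorem Polynomial.iteratedDeriv_eval_s12 (P : ℝ[X]) (k : ℕ) :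
    iteratedDeriv k (fun x => P.eval x) = fun x => (Polynomial.derivative^[k] P).eval x := by
  induction k generalizing P with
  | zero => rfl
  | succ k ih =>
    have hderiv :
        _root_.deriv (fun x : ℝ => P.eval x) = fun x => (Polynomial.derivative P).eval x := by
      funext x
      exact (P.hasDerivAt x).deriv
    rw [iteratedDeriv_succ', hderiv, ih, Function.iterate_succ_apply]

theorem Polynomial.abs_eval_le_max_of_natDegree_le_one {Q : ℝ[X]} (hQ : Q.natDegree ≤ 1)
    {a b t : ℝ} (ht : t ∈ Icc a b) : |Q.eval t| ≤ max |Q.eval a| |Q.eval b| := by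
  rw [eq_X_add_C_of_natDegree_le_one hQ]
  simp only [eval_add, eval_mul, eval_C, eval_X]
  rcases le_total 0 (Q.coeff 1) with h | h
  · exact abs_le_max_abs_abs (by nlinarith [ht.1]) (by nlinarith [ht.2])
  · rw [max_comm]
    exact abs_le_max_abs_abs (by nlinarith [ht.2]) (by nlinarith [ht.1])

theorem Polynomial.abs_iteratedDeriv_eval_le_max {P : ℝ[X]} {k : ℕ} (hP : P.natDegree ≤ k + 1)
    {a b t : ℝ} (ht : t ∈ Icc a b) :
    |iteratedDeriv k (fun x => P.eval x) t|
      ≤ max |iteratedDeriv k (fun x => P.eval x) a| |iteratedDeriv k (fun x => P.eval x) b| := by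
  simp only [P.iteratedDeriv_eval_s12]
  exact abs_eval_le_max_of_natDegree_le_one
    ((natDegree_iterate_derivative P k).trans (by omega)) ht

theorem Polynomial.contDiff_eval (P : ℝ[X]) (n : WithTop ℕ∞) :
    ContDiff ℝ n fun x => P.eval x := by
  simpa using P.contDiff_aeval (𝕜 := ℝ) n

theorem iteratedDerivWithin_comp_mul_add_sub_sub_eval {a b c d α : ℝ} (hab : a < b)
    {g : ℝ → ℝ} {P : ℝ[X]} {k : ℕ} (hg : ContDiffOn ℝ k g (Icc a b))
    (hmaps : MapsTo (fun t => c * t + d) (Icc a b) (Icc a b)) {s : ℝ} (hs : s ∈ Icc a b) :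
    iteratedDerivWithin k (((fun t => g (c * t + d)) - fun t => α * g t) - fun t => P.eval t)
        (Icc a b) s =
      c ^ k * iteratedDerivWithin k g (Icc a b) (c * s + d) -
        α * iteratedDerivWithin k g (Icc a b) s - iteratedDeriv k (fun t => P.eval t) s := by
  have hD := uniqueDiffOn_Icc hab
  have hP := P.contDiff_eval k
  have hgφ : ContDiffOn ℝ k (fun t => g (c * t + d)) (Icc a b) := hg.comp (by fun_prop) hmaps
  have hαg : ContDiffOn ℝ k (fun t => α * g t) (Icc a b) := contDiffOn_const.mul hg
  have hgφαg : ContDiffOn ℝ k ((fun t => g (c * t + d)) - fun t => α * g t) (Icc a b) :=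
    hgφ.sub hαg
  rw [iteratedDerivWithin_sub hs hD (hgφαg s hs) hP.contDiffWithinAt,
    iteratedDerivWithin_sub hs hD (hgφ s hs) (hαg s hs),
    iteratedDerivWithin_const_mul hs hD _ (hg s hs),
    iteratedDerivWithin_comp_mul_add hD hg c d hmaps hs,
    iteratedDerivWithin_eq_iteratedDeriv hD hP.contDiffAt hs, smul_eq_mul]

section TwoPointBoundary

variable {a b M : ℝ} {v : ℝ → ℝ}

theorem le_of_iteratedDerivWithin_two_le (hab : a < b) (hv : ContDiffOn ℝ 2 v (Icc a b))
    (ha : v a = 0) (hb : v b = 0) (hM : ∀ t ∈ Icc a b, iteratedDerivWithin 2 v (Icc a b) t ≤ M)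
    {t : ℝ} (ht : t ∈ Icc a b) : -(M / 2 * ((t - a) * (b - t))) ≤ v t := by
  have hs := uniqueDiffOn_Icc hab
  have hv' : DifferentiableOn ℝ v (Icc a b) := hv.differentiableOn two_ne_zero
  have hv'' : DifferentiableOn ℝ (derivWithin v (Icc a b)) (Icc a b) := by
    simpa only [iteratedDerivWithin_one] using
      hv.differentiableOn_iteratedDerivWithin (m := 1) (by norm_num) hs
  have hquad :
      ∀ s, HasDerivAt (fun s => M / 2 * ((s - a) * (b - s))) (M / 2 * (a + b - 2 * s)) s :=
    fun s => ((((hasDerivAt_id s).sub_const a).mul ((hasDerivAt_id s).const_sub b)).const_mul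
      (M / 2)).congr_deriv (by simp only [id]; ring)
  have hquad' : ∀ s, HasDerivAt (fun s => M / 2 * (a + b - 2 * s)) (-M) s :=
    fun s => (((hasDerivAt_id s).const_mul 2).const_sub (a + b)).const_mul (M / 2) |>.congr_deriv
      (by ring)
  have hconc : ConcaveOn ℝ (Icc a b) fun s => v s + M / 2 * ((s - a) * (b - s)) := by
    refine concaveOn_of_hasDerivWithinAt2_nonpos (convex_Icc a b)
      (f' := fun s => derivWithin v (Icc a b) s + M / 2 * (a + b - 2 * s))
      (f'' := fun s => iteratedDerivWithin 2 v (Icc a b) s - M)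
      (hv.continuousOn.add (by fun_prop)) (fun s hs' => ?_) (fun s hs' => ?_)
      (fun s hs' => by linarith [hM s (interior_subset hs')])
    · exact ((hv' s (interior_subset hs')).hasDerivWithinAt.mono interior_subset).add
        (hquad s).hasDerivWithinAt
    · rw [iteratedDerivWithin_succ, iteratedDerivWithin_one, sub_eq_add_neg]
      exact ((hv'' s (interior_subset hs')).hasDerivWithinAt.mono interior_subset).add
        (hquad' s).hasDerivWithinAt
  have hmin := hconc.min_le_of_mem_Icc (left_mem_Icc.2 hab.le) (right_mem_Icc.2 hab.le) ht
  simp only [ha, hb, sub_self, zero_mul, mul_zero, add_zero, min_self] at hmin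
  linarith

theorem abs_le_of_abs_iteratedDerivWithin_two_le (hab : a < b) (hv : ContDiffOn ℝ 2 v (Icc a b))
    (ha : v a = 0) (hb : v b = 0)
    (hM : ∀ t ∈ Icc a b, |iteratedDerivWithin 2 v (Icc a b) t| ≤ M) {t : ℝ} (ht : t ∈ Icc a b) :
    |v t| ≤ (b - a) ^ 2 / 8 * M := by
  have hM0 : 0 ≤ M := (abs_nonneg _).trans (hM a (left_mem_Icc.2 hab.le))
  have hlow := le_of_iteratedDerivWithin_two_le hab hv ha hb (fun s hs => (abs_le.1 (hM s hs)).2) ht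
  have hup := le_of_iteratedDerivWithin_two_le hab hv.neg (by simp [ha]) (by simp [hb])
    (fun s hs => by
      simpa only [iteratedDerivWithin_fun_neg] using neg_le.1 (abs_le.1 (hM s hs)).1) ht
  have hprod : (t - a) * (b - t) ≤ (b - a) ^ 2 / 4 := by nlinarith [sq_nonneg (2 * t - a - b)]
  have hprod' : M / 2 * ((t - a) * (b - t)) ≤ (b - a) ^ 2 / 8 * M := by nlinarith
  exact abs_le.2 ⟨by linarith, by linarith⟩

theorem abs_le_of_iteratedDerivWithin_even_eq_zero {p : ℕ} (hab : a < b)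
    (hv : ContDiffOn ℝ (2 * p) v (Icc a b))
    (ha : ∀ l < p, iteratedDerivWithin (2 * l) v (Icc a b) a = 0)
    (hb : ∀ l < p, iteratedDerivWithin (2 * l) v (Icc a b) b = 0)
    (hM : ∀ t ∈ Icc a b, |iteratedDerivWithin (2 * p) v (Icc a b) t| ≤ M) {t : ℝ}
    (ht : t ∈ Icc a b) : |v t| ≤ ((b - a) ^ 2 / 8) ^ p * M := by
  induction p generalizing M with
  | zero => simpa using hM t ht
  | succ p ih =>
    have hw : ContDiffOn ℝ 2 (iteratedDerivWithin (2 * p) v (Icc a b)) (Icc a b) :=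
      hv.iteratedDerivWithin_right (uniqueDiffOn_Icc hab)
        (by exact_mod_cast (by omega : 2 + 2 * p ≤ 2 * (p + 1)))
    have hw'' : ∀ s ∈ Icc a b,
        |iteratedDerivWithin 2 (iteratedDerivWithin (2 * p) v (Icc a b)) (Icc a b) s| ≤ M := by
      intro s hs
      rw [iteratedDerivWithin_iteratedDerivWithin, show 2 + 2 * p = 2 * (p + 1) by ring]
      exact hM s hs
    calc |v t| ≤ ((b - a) ^ 2 / 8) ^ p * ((b - a) ^ 2 / 8 * M) :=
          ih (hv.of_le (by exact_mod_cast (by omega : 2 * p ≤ 2 * (p + 1))))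
            (fun l hl => ha l (by omega)) (fun l hl => hb l (by omega))
            (fun s hs => abs_le_of_abs_iteratedDerivWithin_two_le hab hw
              (ha p p.lt_succ_self) (hb p p.lt_succ_self) hw'' hs)
      _ = ((b - a) ^ 2 / 8) ^ (p + 1) * M := by ring

end TwoPointBoundary

theorem IsCompact.abs_le_div_of_forall_exists_abs_le {X : Type*} [TopologicalSpace X]
    {K : Set X} (hK : IsCompact K) {E : X → ℝ} (hE : ContinuousOn E K) {θ δ : ℝ} (hθ₀ : 0 ≤ θ)
    (hθ₁ : θ < 1) (h : ∀ s ∈ K, ∃ t ∈ K, |E s| ≤ θ * |E t| + δ) {s : X} (hs : s ∈ K) :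
    |E s| ≤ δ / (1 - θ) := by
  obtain ⟨s₀, hs₀, hmax⟩ := hK.exists_isMaxOn ⟨s, hs⟩ hE.abs
  obtain ⟨t, ht, hs₀t⟩ := h s₀ hs₀
  have hts₀ : |E t| ≤ |E s₀| := hmax ht
  have hss₀ : |E s| ≤ |E s₀| := hmax hs
  rw [le_div_iff₀ (by linarith)]
  nlinarith [mul_le_mul_of_nonneg_left hts₀ hθ₀]

theorem exists_mem_Icc_sub_one_of_mem_Icc {α : Type*} [LinearOrder α] {x : ℕ → α} {N : ℕ}
    (hN : 0 < N) {s : α} (hs : s ∈ Icc (x 0) (x N)) :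
    ∃ n, 1 ≤ n ∧ n ≤ N ∧ s ∈ Icc (x (n - 1)) (x n) := by
  induction N, hN using Nat.le_induction with
  | base => exact ⟨1, le_rfl, le_rfl, hs⟩
  | succ N hN ih =>
    by_cases hsN : s ≤ x N
    · obtain ⟨n, hn1, hnN, hsn⟩ := ih ⟨hs.1, hsN⟩
      exact ⟨n, hn1, hnN.trans N.le_succ, hsn⟩
    · exact ⟨N + 1, by omega, le_rfl, le_of_not_ge hsN, hs.2⟩

theorem abs_comp_sub_mul_sub_le {p : ℕ} {a b c d α ε M : ℝ} (hab : a < b) {g φ q : ℝ → ℝ}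
    (hg : ContDiffOn ℝ (2 * p) g (Icc a b))
    (hM : ∀ t ∈ Icc a b, |iteratedDerivWithin (2 * p) g (Icc a b) t| ≤ M)
    (hφ : ∀ t, φ t = c * t + d) (hφmaps : MapsTo φ (Icc a b) (Icc a b))
    (hc : |c| ^ (2 * p) ≤ ε) (hα : |α| ≤ ε)
    (hq : ∃ P : ℝ[X], P.natDegree ≤ 2 * p + 1 ∧ ∀ t, q t = P.eval t)
    (hqa : ∀ l ≤ p, iteratedDeriv (2 * l) q a =
      c ^ (2 * l) * iteratedDerivWithin (2 * l) g (Icc a b) (φ a) -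
        α * iteratedDerivWithin (2 * l) g (Icc a b) a)
    (hqb : ∀ l ≤ p, iteratedDeriv (2 * l) q b =
      c ^ (2 * l) * iteratedDerivWithin (2 * l) g (Icc a b) (φ b) -
        α * iteratedDerivWithin (2 * l) g (Icc a b) b)
    {t : ℝ} (ht : t ∈ Icc a b) :
    |g (φ t) - α * g t - q t| ≤ ((b - a) ^ 2 / 8) ^ p * (4 * (ε * M)) := by
  obtain ⟨P, hPdeg, hqP⟩ := hq
  obtain rfl : q = fun t => P.eval t := funext hqP
  obtain rfl : φ = fun t => c * t + d := funext hφ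
  have hh : ContDiffOn ℝ (2 * p)
      (((fun t => g (c * t + d)) - fun t => α * g t) - fun t => P.eval t) (Icc a b) :=
    ((hg.comp (by fun_prop) hφmaps).sub (contDiffOn_const.mul hg)).sub
      (P.contDiff_eval _).contDiffOn
  have hderiv : ∀ k ≤ 2 * p, ∀ s ∈ Icc a b, iteratedDerivWithin k
      (((fun t => g (c * t + d)) - fun t => α * g t) - fun t => P.eval t) (Icc a b) s =
      c ^ k * iteratedDerivWithin k g (Icc a b) (c * s + d) -
        α * iteratedDerivWithin k g (Icc a b) s - iteratedDeriv k (fun t => P.eval t) s :=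
    fun k hk s hs => iteratedDerivWithin_comp_mul_add_sub_sub_eval hab
      (hg.of_le (by exact_mod_cast hk)) hφmaps hs
  have hpair : ∀ u ∈ Icc a b, ∀ v ∈ Icc a b,
      |c ^ (2 * p) * iteratedDerivWithin (2 * p) g (Icc a b) u -
        α * iteratedDerivWithin (2 * p) g (Icc a b) v| ≤ 2 * (ε * M) := by
    intro u hu v hv
    calc _ ≤ |c ^ (2 * p)| * |iteratedDerivWithin (2 * p) g (Icc a b) u|
          + |α| * |iteratedDerivWithin (2 * p) g (Icc a b) v| := by
          rw [← abs_mul, ← abs_mul]; exact abs_sub _ _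
      _ ≤ ε * M + ε * M := by
          have hε : 0 ≤ ε := (abs_nonneg α).trans hα
          rw [abs_pow]
          exact add_le_add (mul_le_mul hc (hM u hu) (abs_nonneg _) hε)
            (mul_le_mul hα (hM v hv) (abs_nonneg _) hε)
      _ = 2 * (ε * M) := by ring
  have hP2p : ∀ s ∈ Icc a b, |iteratedDeriv (2 * p) (fun t => P.eval t) s| ≤ 2 * (ε * M) := by
    intro s hs'
    refine (Polynomial.abs_iteratedDeriv_eval_le_max hPdeg hs').trans (max_le ?_ ?_)
    · rw [hqa p le_rfl]; exact hpair _ (hφmaps (left_mem_Icc.2 hab.le)) _ (left_mem_Icc.2 hab.le)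
    · rw [hqb p le_rfl]; exact hpair _ (hφmaps (right_mem_Icc.2 hab.le)) _ (right_mem_Icc.2 hab.le)
  refine abs_le_of_iteratedDerivWithin_even_eq_zero hab hh (fun l hl => ?_) (fun l hl => ?_)
    (fun s hs' => ?_) ht
  · rw [hderiv _ (by omega) _ (left_mem_Icc.2 hab.le), hqa l hl.le, sub_self]
  · rw [hderiv _ (by omega) _ (right_mem_Icc.2 hab.le), hqb l hl.le, sub_self]
  · rw [hderiv _ le_rfl _ hs']
    calc _ ≤ _ + _ := abs_sub _ _
      _ ≤ 2 * (ε * M) + 2 * (ε * M) := add_le_add (hpair _ (hφmaps hs') _ hs') (hP2p s hs')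
      _ = 4 * (ε * M) := by ring

section PartitionAffineMap

variable {x : ℕ → ℝ} {N n : ℕ}

/-- The map `L n` of the paper. -/
noncomputable def partitionAffineMap (x : ℕ → ℝ) (N n : ℕ) (t : ℝ) : ℝ :=
  (x n - x (n - 1)) / (x N - x 0) * t + (x N * x (n - 1) - x 0 * x n) / (x N - x 0)

theorem partitionAffineMap_left (h : x 0 < x N) : partitionAffineMap x N n (x 0) = x (n - 1) := by
  rw [partitionAffineMap]; field_simp [(sub_pos.2 h).ne']; ring

theorem partitionAffineMap_right (h : x 0 < x N) : partitionAffineMap x N n (x N) = x n := by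
  rw [partitionAffineMap]; field_simp [(sub_pos.2 h).ne']; ring

theorem continuous_partitionAffineMap : Continuous (partitionAffineMap x N n) := by
  unfold partitionAffineMap; fun_prop

theorem mapsTo_partitionAffineMap (hx : Monotone x) (h : x 0 < x N) (hnN : n ≤ N) :
    MapsTo (partitionAffineMap x N n) (Icc (x 0) (x N)) (Icc (x 0) (x N)) := by
  have hmono : Monotone (partitionAffineMap x N n) := fun s s' hss' => by
    have : 0 ≤ (x n - x (n - 1)) / (x N - x 0) :=
      div_nonneg (sub_nonneg.2 (hx (n.sub_le 1))) (sub_nonneg.2 (hx N.zero_le))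
    unfold partitionAffineMap
    gcongr
  refine hmono.mapsTo_Icc.mono_right (Icc_subset_Icc ?_ ?_)
  · rw [partitionAffineMap_left h]; exact hx (Nat.zero_le _)
  · rw [partitionAffineMap_right h]; exact hx hnN

end PartitionAffineMap

theorem abs_sub_le_of_lidstone_FIF {p N : ℕ} {a b ε M : ℝ} (hab : a < b) (hN : 0 < N)
    {g ℓ : ℝ → ℝ} (hg : ContDiffOn ℝ (2 * p) g (Icc a b))
    (hM : ∀ t ∈ Icc a b, |iteratedDerivWithin (2 * p) g (Icc a b) t| ≤ M)
    {x : ℕ → ℝ} (hx : Monotone x) (hx0 : x 0 = a) (hxN : x N = b)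
    (hslope : ∀ n, 1 ≤ n → n ≤ N → |(x n - x (n - 1)) / (x N - x 0)| ^ (2 * p) ≤ ε)
    (hε : ε ≤ 1 / 2) {α : ℕ → ℝ} (hα : ∀ n, 1 ≤ n → n ≤ N → |α n| ≤ ε)
    {q : ℕ → ℝ → ℝ}
    (hq : ∀ n, 1 ≤ n → n ≤ N →
      (∃ P : Polynomial ℝ, P.natDegree ≤ 2 * p + 1 ∧ ∀ t, q n t = P.eval t) ∧
      ∀ l ≤ p,
        iteratedDeriv (2 * l) (q n) (x 0) =
          ((x n - x (n - 1)) / (x N - x 0)) ^ (2 * l) *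
            iteratedDerivWithin (2 * l) g (Icc a b) (x (n - 1)) -
          α n * iteratedDerivWithin (2 * l) g (Icc a b) (x 0) ∧
        iteratedDeriv (2 * l) (q n) (x N) =
          ((x n - x (n - 1)) / (x N - x 0)) ^ (2 * l) *
            iteratedDerivWithin (2 * l) g (Icc a b) (x n) -
          α n * iteratedDerivWithin (2 * l) g (Icc a b) (x N))
    (hℓ : ContinuousOn ℓ (Icc a b))
    (hFIF : ∀ n, 1 ≤ n → n ≤ N → ∀ t ∈ Icc a b,
      ℓ (partitionAffineMap x N n t) = α n * ℓ t + q n t)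
    {t : ℝ} (ht : t ∈ Icc a b) :
    |g t - ℓ t| ≤ 2 * (((b - a) ^ 2 / 8) ^ p * (4 * (ε * M))) := by
  subst hx0 hxN
  set δ := ((x N - x 0) ^ 2 / 8) ^ p * (4 * (ε * M))
  have hdefect : ∀ n, 1 ≤ n → n ≤ N → ∀ t ∈ Icc (x 0) (x N),
      |g (partitionAffineMap x N n t) - α n * g t - q n t| ≤ δ := fun n hn hnN t ht =>
    abs_comp_sub_mul_sub_le (φ := partitionAffineMap x N n) hab hg hM (fun _ => rfl)
      (mapsTo_partitionAffineMap hx hab hnN) (hslope n hn hnN) (hα n hn hnN) (hq n hn hnN).1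
      (fun l hl => by rw [partitionAffineMap_left hab]; exact ((hq n hn hnN).2 l hl).1)
      (fun l hl => by rw [partitionAffineMap_right hab]; exact ((hq n hn hnN).2 l hl).2) ht
  refine (isCompact_Icc.abs_le_div_of_forall_exists_abs_le (hg.continuousOn.sub hℓ)
    (θ := 1 / 2) (δ := δ) (by norm_num) (by norm_num) (fun s hs => ?_) ht).trans_eq (by ring)
  obtain ⟨n, hn, hnN, hsn⟩ := exists_mem_Icc_sub_one_of_mem_Icc hN hs
  rw [← partitionAffineMap_left (n := n) hab, ← partitionAffineMap_right (n := n) hab] at hsn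
  obtain ⟨t, ht, rfl⟩ :=
    intermediate_value_Icc hab.le continuous_partitionAffineMap.continuousOn hsn
  refine ⟨t, ht, ?_⟩
  calc |(g - ℓ) (partitionAffineMap x N n t)|
      = |α n * (g t - ℓ t) + (g (partitionAffineMap x N n t) - α n * g t - q n t)| := by
        rw [Pi.sub_apply, hFIF n hn hnN t ht]; ring_nf
    _ ≤ |α n| * |g t - ℓ t| + δ := by
        rw [← abs_mul]; exact (abs_add_le _ _).trans (add_le_add le_rfl (hdefect n hn hnN t ht))
    _ ≤ 1 / 2 * |g t - ℓ t| + δ := by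
        gcongr; exact (hα n hn hnN).trans hε

/-- Convergence of the Lidstone FIF to the data generating function: if
`g` is `2p`-times continuously differentiable on `[a, b]`, then there is a
constant `C > 0` such that for every `N ≥ 2`, every admissible scaling vector
with `|α n| < N^(-2p)` and the uniform partition `x n = a + n (b - a)/N`,
any Lidstone FIF `ℓ_α` for the data `y n k = g^(2k) (x n)` satisfies
`‖g - ℓ_α‖_∞ ≤ C · N^(-2p)`. -/
theorem lidstone_FIF_convergence
    (p : ℕ) (hp : 1 ≤ p) (a b : ℝ) (hab : a < b)
    (g : ℝ → ℝ) (hg : ContDiffOn ℝ (2 * p) g (Set.Icc a b)) :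
    ∃ C : ℝ, 0 < C ∧
      ∀ (N : ℕ), 2 ≤ N →
      ∀ x : ℕ → ℝ, (∀ n, x n = a + n * (b - a) / N) →
      ∀ L : ℕ → ℝ → ℝ,
        (∀ n t, L n t = ((x n - x (n - 1)) / (x N - x 0)) * t +
          (x N * x (n - 1) - x 0 * x n) / (x N - x 0)) →
      ∀ α : ℕ → ℝ, (∀ n, 1 ≤ n → n ≤ N → |α n| < ((N : ℝ) ^ (2 * p))⁻¹) →
      ∀ q : ℕ → ℝ → ℝ,
        (∀ n, 1 ≤ n → n ≤ N →
          (∃ P : Polynomial ℝ, P.natDegree ≤ 2 * p + 1 ∧ ∀ t, q n t = P.eval t) ∧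
          ∀ l ≤ p,
            iteratedDeriv (2 * l) (q n) (x 0) =
              ((x n - x (n - 1)) / (x N - x 0)) ^ (2 * l) *
                iteratedDerivWithin (2 * l) g (Set.Icc a b) (x (n - 1)) -
              α n * iteratedDerivWithin (2 * l) g (Set.Icc a b) (x 0) ∧
            iteratedDeriv (2 * l) (q n) (x N) =
              ((x n - x (n - 1)) / (x N - x 0)) ^ (2 * l) *
                iteratedDerivWithin (2 * l) g (Set.Icc a b) (x n) -
              α n * iteratedDerivWithin (2 * l) g (Set.Icc a b) (x N)) →
      ∀ ℓ : ℝ → ℝ,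
        ContinuousOn ℓ (Set.Icc a b) →
        (∀ n, 1 ≤ n → n ≤ N → ∀ t ∈ Set.Icc a b, ℓ (L n t) = α n * ℓ t + q n t) →
        ∀ t ∈ Set.Icc a b, |g t - ℓ t| ≤ C * ((N : ℝ) ^ (2 * p))⁻¹ := by
  obtain ⟨M, hM⟩ := isCompact_Icc.exists_bound_of_continuousOn
    (hg.continuousOn_iteratedDerivWithin le_rfl (uniqueDiffOn_Icc hab))
  have hM0 : 0 ≤ M := (norm_nonneg _).trans (hM a (left_mem_Icc.2 hab.le))
  refine ⟨8 * ((b - a) ^ 2 / 8) ^ p * M + 1, by positivity, ?_⟩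
  intro N hN x hx L hL α hα q hq ℓ hℓ hFIF t ht
  obtain rfl : L = partitionAffineMap x N := funext₂ hL
  have hN0 : (0 : ℝ) < N := by positivity
  have hx0 : x 0 = a := by simp [hx]
  have hxN : x N = b := by rw [hx]; field_simp; ring
  have hslope : ∀ n, 1 ≤ n → |(x n - x (n - 1)) / (x N - x 0)| = (N : ℝ)⁻¹ := fun n hn => by
    have hstep : x n - x (n - 1) = (b - a) / N := by rw [hx, hx, Nat.cast_sub hn]; ring
    rw [hstep, hx0, hxN, div_right_comm, div_self (sub_pos.2 hab).ne', one_div, abs_inv,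
      Nat.abs_cast]
  have hε : ((N : ℝ) ^ (2 * p))⁻¹ ≤ 1 / 2 := by
    rw [inv_le_comm₀ (by positivity) (by norm_num)]
    calc ((1 : ℝ) / 2)⁻¹ ≤ N := by norm_num; exact_mod_cast hN
      _ ≤ (N : ℝ) ^ (2 * p) := le_self_pow₀ (by exact_mod_cast (by omega : 1 ≤ N)) (by omega)
  calc |g t - ℓ t| ≤ 2 * (((b - a) ^ 2 / 8) ^ p * (4 * (((N : ℝ) ^ (2 * p))⁻¹ * M))) :=
        abs_sub_le_of_lidstone_FIF hab (by omega) hg (fun s hs => by simpa using hM s hs)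
          (fun m n hmn => by rw [hx, hx]; gcongr) hx0 hxN
          (fun n hn _ => by rw [hslope n hn, inv_pow]) hε (fun n hn hnN => (hα n hn hnN).le) hq
          hℓ hFIF ht
    _ ≤ (8 * ((b - a) ^ 2 / 8) ^ p * M + 1) * ((N : ℝ) ^ (2 * p))⁻¹ := by
        nlinarith [show 0 < ((N : ℝ) ^ (2 * p))⁻¹ by positivity]
end
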